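/- arXiv:1107.1962 — 2 statements merged into one kernel-verified Lean document; each statement's English description precedes it below -/
import Mathlib

section
/- Let R be an iterative differential ring and let l ∈ ℕ. Set R_l := ⋂_{j < l} ker(∂^(p^j)). Then R_l is a subring of R, and the family (∂^(k p^l))_{k∈ℕ} restricted to R_l defines an iterative derivation on R_l. -/
/-!
Write `D_k` for the `k`-th map. Composition gives `D_{n-i} ∘ D_i = C(n, i) • D_n`, so whenever
`C(n, i)` is prime to `p`, `D_i a = 0` forces `D_n a = 0`. For `a ∈ R_l` and `p^l ∤ n`, take
`i = p^v` with `v = v_p(n) < l`: by Lucas, `C(p^v m, p^v) ≡ m ≢ 0 (mod p)`. Hence all `D_n a` with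
`p^l ∤ n` vanish, which makes `R_l` closed under products and under the `D_{k p^l}`, and collapses
the Leibniz sum for `D_{k p^l}` onto the indices divisible by `p^l`. The remaining axiom is
Lucas' congruence `C((i+j) p^l, i p^l) ≡ C(i+j, i) (mod p)`.
-/

/-- An iterative derivation (in the sense of Hasse–Schmidt) on a commutative ring `R`. -/
structure IterativeDerivation (R : Type*) [CommRing R] where
  d : ℕ → R → R
  d_zero : d 0 = id
  d_add : ∀ k a b, d k (a + b) = d k a + d k b
  d_mul : ∀ k a b, d k (a * b) =
    ∑ ij ∈ Finset.HasAntidiagonal.antidiagonal k, d ij.1 a * d ij.2 b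
  d_comp : ∀ i j a, d j (d i a) = ((i + j).choose i : ℕ) • d (i + j) a

open Finset.HasAntidiagonal

lemma Finset.Nat.sum_antidiagonal_mul_right {M : Type*} [AddCommMonoid M] {c : ℕ} (hc : c ≠ 0)
    (k : ℕ) (f : ℕ × ℕ → M) (hf : ∀ x : ℕ × ℕ, ¬ c ∣ x.1 → f x = 0) :
    ∑ x ∈ antidiagonal (k * c), f x = ∑ x ∈ antidiagonal k, f (x.1 * c, x.2 * c) := by
  refine (Finset.sum_of_injOn (fun x : ℕ × ℕ => (x.1 * c, x.2 * c)) ?_ ?_ ?_ fun _ _ => rfl).symm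
  · rintro ⟨u, v⟩ - ⟨u', v'⟩ - h
    simp only [Prod.mk.injEq, Nat.mul_left_inj hc] at h
    rw [h.1, h.2]
  · rintro ⟨u, v⟩ h
    simp only [Finset.mem_coe, Finset.HasAntidiagonal.mem_antidiagonal] at h ⊢
    rw [← add_mul, h]
  · rintro ⟨i, j⟩ hij hnot
    rw [Finset.HasAntidiagonal.mem_antidiagonal] at hij
    refine hf _ ?_
    rintro ⟨u, rfl⟩
    rw [mul_comm] at hij hnot
    have hj : j = (k - u) * c := by rw [Nat.sub_mul]; omega
    have hu : u ≤ k := Nat.le_of_mul_le_mul_right (by omega) (Nat.pos_of_ne_zero hc)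
    refine hnot ⟨(u, k - u), ?_, by simp [hj]⟩
    simp only [Finset.mem_coe, Finset.HasAntidiagonal.mem_antidiagonal]
    omega

lemma Nat.natCast_choose_mul_pow_eq {R : Type*} [AddMonoidWithOne R] (p : ℕ) [Fact p.Prime]
    [CharP R p] (l a b : ℕ) : (((a * p ^ l).choose (b * p ^ l) : ℕ) : R) = (a.choose b : ℕ) := by
  rw [mul_comm a, mul_comm b]
  exact CharP.natCast_eq_natCast' R p Choose.choose_pow_mul_pow_mul_modEq_choose_nat

namespace IterativeDerivation

variable {R : Type*} [CommRing R] (D : IterativeDerivation R)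

def toAddMonoidHom (k : ℕ) : R →+ R := AddMonoidHom.mk' (D.d k) (D.d_add k)

lemma map_zero (k : ℕ) : D.d k 0 = 0 := (D.toAddMonoidHom k).map_zero

lemma map_neg (k : ℕ) (a : R) : D.d k (-a) = -D.d k a := (D.toAddMonoidHom k).map_neg a

lemma d_zero_apply (a : R) : D.d 0 a = a := congrFun D.d_zero a

lemma map_one {k : ℕ} (hk : k ≠ 0) : D.d k 1 = 0 := by
  induction k using Nat.strong_induction_on with
  | _ k ih =>
    have h := D.d_mul k 1 1
    -- only the terms `(0, k)` and `(k, 0)` survive, so `D_k 1 = 2 D_k 1`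
    rw [mul_one, Finset.sum_eq_add (0, k) (k, 0) (by simp [hk])] at h
    · simpa [d_zero_apply] using h
    · rintro ⟨i, j⟩ hij hne
      rw [mem_antidiagonal] at hij
      have hi : i ≠ 0 := fun hi => hne.1 (by simp [hi, ← hij])
      have hj : j ≠ 0 := fun hj => hne.2 (by simp [hj, ← hij])
      rw [ih i (by omega) hi, zero_mul]
    all_goals simp

variable (p : ℕ) [Fact p.Prime] [CharP R p]

lemma apply_eq_zero_of_not_dvd_choose {i n : ℕ} {a : R} (hin : i ≤ n)
    (hc : ¬ p ∣ n.choose i) (ha : D.d i a = 0) : D.d n a = 0 := by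
  have h := D.d_comp i (n - i) a
  rw [ha, D.map_zero, Nat.add_sub_cancel' hin, nsmul_eq_mul] at h
  exact ((CharP.isUnit_natCast_iff (R := R) Fact.out).2 hc).mul_right_eq_zero.1 h.symm

lemma apply_eq_zero_of_not_pow_dvd {l n : ℕ} {a : R} (ha : ∀ j < l, D.d (p ^ j) a = 0)
    (hn : ¬ p ^ l ∣ n) : D.d n a = 0 := by
  have hp : p.Prime := Fact.out
  have hn0 : n ≠ 0 := by rintro rfl; exact hn (dvd_zero _)
  obtain ⟨v, m, hpm, rfl⟩ := Nat.exists_eq_pow_mul_and_not_dvd hn0 p hp.ne_one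
  have hvl : v < l := lt_of_not_ge fun hlv => hn ((pow_dvd_pow p hlv).mul_right m)
  have hm : m ≠ 0 := by rintro rfl; exact hpm (dvd_zero _)
  refine D.apply_eq_zero_of_not_dvd_choose p (Nat.le_mul_of_pos_right _ (Nat.pos_of_ne_zero hm))
    ?_ (ha v hvl)
  have hlucas := Choose.choose_pow_mul_pow_mul_modEq_choose_nat (p := p) (k := v) (a := m) (b := 1)
  rw [mul_one, Nat.choose_one_right] at hlucas
  rwa [hlucas.dvd_iff dvd_rfl]

def higherConstants (l : ℕ) : Subring R where
  carrier := {a | ∀ j < l, D.d (p ^ j) a = 0}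
  zero_mem' _ _ := D.map_zero _
  one_mem' _ _ := D.map_one (pow_ne_zero _ (Fact.out : p.Prime).ne_zero)
  add_mem' ha hb j hj := by rw [D.d_add, ha j hj, hb j hj, add_zero]
  neg_mem' ha j hj := by rw [D.map_neg, ha j hj, neg_zero]
  mul_mem' {a b} ha hb j hj := by
    rw [D.d_mul]
    refine Finset.sum_eq_zero fun ⟨i, i'⟩ hii' => ?_
    rw [mem_antidiagonal] at hii'
    rcases Nat.eq_zero_or_pos i with rfl | hi
    · rw [zero_add] at hii'
      rw [hii', hb j hj, mul_zero]
    · have hlt : i < p ^ l := by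
        have := Nat.pow_lt_pow_right (Fact.out : p.Prime).one_lt hj
        omega
      rw [D.apply_eq_zero_of_not_pow_dvd p ha (Nat.not_dvd_of_pos_of_lt hi hlt), zero_mul]

variable {p}

lemma apply_mul_pow_mem_higherConstants {l : ℕ} {a : R} (ha : a ∈ D.higherConstants p l)
    (k : ℕ) : D.d (k * p ^ l) a ∈ D.higherConstants p l := by
  intro j hj
  have hp : p.Prime := Fact.out
  have hnd : ¬ p ^ l ∣ k * p ^ l + p ^ j := by
    rw [Nat.dvd_add_right (dvd_mul_left _ _)]
    exact Nat.not_dvd_of_pos_of_lt (pow_pos hp.pos j) (Nat.pow_lt_pow_right hp.one_lt hj)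
  rw [D.d_comp, D.apply_eq_zero_of_not_pow_dvd p ha hnd, smul_zero]

variable (p)

def restrictHigherConstants (l : ℕ) : IterativeDerivation (D.higherConstants p l) where
  d k a := ⟨D.d (k * p ^ l) a, D.apply_mul_pow_mem_higherConstants a.2 k⟩
  d_zero := funext fun a => Subtype.ext (by simp [d_zero_apply])
  d_add k a b := Subtype.ext (D.d_add _ _ _)
  d_mul k a b := Subtype.ext <| by
    simp only [Subring.coe_mul, D.d_mul, AddSubmonoidClass.coe_finsetSum]
    exact Finset.Nat.sum_antidiagonal_mul_right (pow_ne_zero _ (Fact.out : p.Prime).ne_zero) k _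
      fun x hx => by rw [D.apply_eq_zero_of_not_pow_dvd p a.2 hx, zero_mul]
  d_comp i j a := Subtype.ext <| by
    simp only [D.d_comp, ← add_mul, nsmul_eq_mul, Subring.coe_mul, Subring.coe_natCast,
      Nat.natCast_choose_mul_pow_eq]

end IterativeDerivation

/-- For an iterative differential ring `R` of characteristic `p > 0` and `l ∈ ℕ`,
the set `R_l = ⋂_{j < l} ker D^(p^j)` is a subring of `R`, stable under the maps
`D^(k·p^l)`, and the restricted family `(D^(k·p^l))_k` is an iterative derivation
on `R_l`. -/
theorem higher_constants_subring {R : Type} [CommRing R] (p : ℕ) [Fact p.Prime]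
    [CharP R p] (der : IterativeDerivation R) (l : ℕ) :
    ∃ S : Subring R,
      ((S : Set R) = {a : R | ∀ j : ℕ, j < l → der.d (p ^ j) a = 0}) ∧
      (∀ (k : ℕ) (a : R), a ∈ S → der.d (k * p ^ l) a ∈ S) ∧
      ∃ Dl : IterativeDerivation S,
        ∀ (k : ℕ) (a : S), (Dl.d k a : R) = der.d (k * p ^ l) (a : R) :=
  ⟨der.higherConstants p l, rfl, fun k _ ha => der.apply_mul_pow_mem_higherConstants ha k,
    der.restrictHigherConstants p l, fun _ _ => rfl⟩
end

section
/- Let G be a linear algebraic group over an algebraically closed field with identity component G°, and let H ≤ G be a finite subgroup minimal with the property G = G°·H. Then the quotient map H → H/(H ∩ G°) is a Frattini epimorphism of finite groups; consequently H ∩ G° is contained in the Frattini subgroup Φ(H). -/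
open scoped Pointwise

/-!
If `S ≤ H` generates `H` together with `H ∩ G°`, then `S` is again a supplement of the normal
subgroup `G°`, since `G° ⊔ S ≥ G° ⊔ (G° ⊓ H) ⊔ S = G° ⊔ H = G`; minimality of `H` forces
`S = H`. So `H ∩ G°` consists of non-generators of `H`, i.e. it lies in every maximal subgroup.
-/

lemma Order.le_radical_of_forall_sup_eq_top {α : Type*} [CompleteLattice α] {a : α}
    (h : ∀ b, a ⊔ b = ⊤ → b = ⊤) : a ≤ Order.radical α := by
  refine le_iInf₂ fun m hm => ?_
  by_contra ha
  exact hm.1 (h m (by rw [sup_comm]; exact hm.2 _ (left_lt_sup.2 ha)))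

namespace Subgroup

variable {G : Type*} [Group G]

instance connectedComponentOfOne_normal [TopologicalSpace G] [IsTopologicalGroup G] :
    (connectedComponentOfOne G).Normal where
  conj_mem n hn g := by
    have hconj : Continuous fun x : G => g * x * g⁻¹ := by fun_prop
    show g * n * g⁻¹ ∈ connectedComponent (1 : G)
    simpa using hconj.image_connectedComponent_subset (1 : G) ⟨n, hn, rfl⟩

lemma sup_eq_top_iff_coe_mul_eq_univ (N H : Subgroup G) [N.Normal] :
    N ⊔ H = ⊤ ↔ (N : Set G) * (H : Set G) = Set.univ := by
  rw [← normal_mul, ← coe_top, SetLike.coe_set_eq]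

lemma sup_map_subtype_eq_top {N H : Subgroup G} (hNH : N ⊔ H = ⊤) {S : Subgroup H}
    (hS : N.subgroupOf H ⊔ S = ⊤) : N ⊔ S.map H.subtype = ⊤ := by
  have hH : N ⊓ H ⊔ S.map H.subtype = H := by
    rw [← subgroupOf_map_subtype, ← map_sup, hS, ← MonoidHom.range_eq_map, range_subtype]
  calc N ⊔ S.map H.subtype = N ⊔ (N ⊓ H ⊔ S.map H.subtype) := by
        rw [← sup_assoc, sup_inf_self]
    _ = ⊤ := by rw [hH, hNH]

end Subgroup

theorem minimal_supplement_frattini_general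
    {G : Type*} [Group G] [TopologicalSpace G] [IsTopologicalGroup G]
    (H : Subgroup G)
    (hsup : ((Subgroup.connectedComponentOfOne G : Subgroup G) : Set G) * (H : Set G)
      = Set.univ)
    (hmin : ∀ W : Subgroup G, W ≤ H →
      ((Subgroup.connectedComponentOfOne G : Subgroup G) : Set G) * (W : Set G)
        = Set.univ → W = H) :
    (∀ S : Subgroup ↥H,
        (Subgroup.connectedComponentOfOne G).subgroupOf H ⊔ S = ⊤ → S = ⊤) ∧
      (Subgroup.connectedComponentOfOne G).subgroupOf H ≤ frattini ↥H := by
  set N := Subgroup.connectedComponentOfOne G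
  have hNH : N ⊔ H = ⊤ := (N.sup_eq_top_iff_coe_mul_eq_univ H).2 hsup
  have nongenerating : ∀ S : Subgroup H, N.subgroupOf H ⊔ S = ⊤ → S = ⊤ := by
    intro S hS
    have hSH : S.map H.subtype = H := hmin _ (Subgroup.map_subtype_le S)
      ((N.sup_eq_top_iff_coe_mul_eq_univ _).1 (Subgroup.sup_map_subtype_eq_top hNH hS))
    rw [← S.comap_map_eq_self_of_injective H.subtype_injective, hSH]
    exact Subgroup.subgroupOf_self H
  exact ⟨nongenerating, Order.le_radical_of_forall_sup_eq_top nongenerating⟩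

/-- Let `G` be a linear algebraic group (modelled as a topological group) with identity
component `G°`, and let `H ≤ G` be a finite subgroup, minimal with the property
`G = G°·H`. Then the quotient map `H → H/(H ∩ G°)` is a Frattini epimorphism of finite
groups (no proper subgroup of `H` together with the kernel `H ∩ G°` generates `H`);
consequently `H ∩ G° ≤ Φ(H)`. -/
theorem minimal_supplement_frattini
    {G : Type*} [Group G] [TopologicalSpace G] [IsTopologicalGroup G]
    (H : Subgroup G) (hHfin : Finite H)
    (hsup : ((Subgroup.connectedComponentOfOne G : Subgroup G) : Set G) * (H : Set G)
      = Set.univ)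
    (hmin : ∀ W : Subgroup G, W ≤ H →
      ((Subgroup.connectedComponentOfOne G : Subgroup G) : Set G) * (W : Set G)
        = Set.univ → W = H) :
    (∀ S : Subgroup ↥H,
        (Subgroup.connectedComponentOfOne G).subgroupOf H ⊔ S = ⊤ → S = ⊤) ∧
      (Subgroup.connectedComponentOfOne G).subgroupOf H ≤ frattini ↥H :=
  minimal_supplement_frattini_general H hsup hmin
end
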